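/- In the d-dimensional lattice graph, for each u in the localized solution space 𝒰^{(t)} and each node p, define J_p^u ∈ ℝ^{E_t} by J_p^u(e) = u_p − u_q if e = pq ∈ E_t and 0 otherwise, where E_t is the set of edges between slices (L_t ∪ K_t) and (L_{t+1} ∪ K_{t+1}). Then the orthogonal complement in ℝ^{E_t} of span{ J_p^u : u ∈ 𝒰^{(t)}, p ∈ L_t ∪ L_{t+1} ∪ J_t } is trivial: span{ J_p^u }^⊥ = {0}. -/

import Mathlib

noncomputable section
open Classical Finset

namespace DiscreteCalderon

/-- Vertices of the ambient lattice `ℤ^d`. -/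
abbrev V (d : ℕ) := Fin d → ℤ

/-- Interior vertex set `D = {x : 1 ≤ x_i ≤ n}`. -/
def Dset (d n : ℕ) : Set (V d) := {x | ∀ i, 1 ≤ x i ∧ x i ≤ (n : ℤ)}

/-- ℓ¹ distance. -/
def dist1 {d : ℕ} (p q : V d) : ℤ := ∑ i, |p i - q i|

/-- Boundary vertex set `∂D`: vertices at ℓ¹ distance 1 from `D`. -/
def Bset (d n : ℕ) : Set (V d) := {p | p ∉ Dset d n ∧ ∃ q ∈ Dset d n, dist1 p q = 1}

/-- All vertices of the graph, `D ∪ ∂D`. -/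
def Vset (d n : ℕ) : Set (V d) := Dset d n ∪ Bset d n

/-- Adjacency of the lattice graph: ℓ¹ distance 1, both endpoints vertices,
not both on the boundary. -/
def Adj (d n : ℕ) (p q : V d) : Prop :=
  dist1 p q = 1 ∧ p ∈ Vset d n ∧ q ∈ Vset d n ∧ (p ∈ Dset d n ∨ q ∈ Dset d n)

/-- A finite box containing all vertices. -/
def box (d n : ℕ) : Finset (V d) :=
  Fintype.piFinset (fun _ : Fin d => Finset.Icc (0 : ℤ) ((n : ℤ) + 1))

/-- Neighbours of `p` in the graph, as a finite set. -/
def nbr (d n : ℕ) (p : V d) : Finset (V d) := (box d n).filter (fun q => Adj d n p q)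

/-- Interior neighbours of `p`. -/
def nbrD (d n : ℕ) (p : V d) : Finset (V d) := (nbr d n p).filter (fun q => q ∈ Dset d n)

/-- The discrete (weighted) Laplacian `(Δ_γ u)_p = ∑_{q∈N(p)} γ_{qp}(u_q - u_p)`. -/
def lap (d n : ℕ) (γ : V d → V d → ℝ) (u : V d → ℝ) (p : V d) : ℝ :=
  ∑ q ∈ nbr d n p, γ q p * (u q - u p)

/-- The boundary current `(D_γ u)_p = ∑_{q∈N(p)∩D} γ_{pq}(u_q - u_p)`
(there is exactly one interior neighbour of a boundary node). -/
def cur (d n : ℕ) (γ : V d → V d → ℝ) (u : V d → ℝ) (p : V d) : ℝ :=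
  ∑ q ∈ nbrD d n p, γ p q * (u q - u p)

/-- A strictly positive symmetric conductivity. -/
def GoodCond (d n : ℕ) (γ : V d → V d → ℝ) : Prop :=
  (∀ p q, γ p q = γ q p) ∧ ∀ p q, Adj d n p q → 0 < γ p q

/-- The coordinate sum of a lattice point. -/
def sum1 {d : ℕ} (x : V d) : ℤ := ∑ i, x i

/-- Interior diagonal slice `L_t`. -/
def L (d n : ℕ) (t : ℤ) : Set (V d) := {x | x ∈ Dset d n ∧ sum1 x = t}

/-- `L_t^S = ∪_{ℓ ≤ t} L_ℓ`. -/
def LS (d n : ℕ) (t : ℤ) : Set (V d) := {x | x ∈ Dset d n ∧ sum1 x ≤ t}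

/-- Boundary diagonal slice `K_t`. -/
def K (d n : ℕ) (t : ℤ) : Set (V d) := {x | x ∈ Bset d n ∧ sum1 x = t}

/-- `K_t^- = {x ∈ K_t : min_i x_i = 0}`. -/
def Km (d n : ℕ) (t : ℤ) : Set (V d) := {x | x ∈ K d n t ∧ ∃ i, x i = 0}

/-- `K_t^+ = {x ∈ K_t : max_i x_i = n+1}`. -/
def Kp (d n : ℕ) (t : ℤ) : Set (V d) := {x | x ∈ K d n t ∧ ∃ i, x i = (n : ℤ) + 1}

/-- `K_t^{S-} = ∪_{ℓ ≤ t} K_ℓ^-`. -/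
def KSm (d n : ℕ) (t : ℤ) : Set (V d) := {x | x ∈ Bset d n ∧ sum1 x ≤ t ∧ ∃ i, x i = 0}

/-- `K_t^{S+} = ∪_{ℓ ≤ t} K_ℓ^+`. -/
def KSp (d n : ℕ) (t : ℤ) : Set (V d) := {x | x ∈ Bset d n ∧ sum1 x ≤ t ∧ ∃ i, x i = (n : ℤ) + 1}

/-- The lower boundary region `J_t^S = K_t^{S-} ∪ K_{t+1}^{S+}`. -/
def JS (d n : ℕ) (t : ℤ) : Set (V d) := KSm d n t ∪ KSp d n (t + 1)

/-- `J_t = K_t^- ∪ K_{t+1}^+`. -/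
def Jslice (d n : ℕ) (t : ℤ) : Set (V d) := Km d n t ∪ Kp d n (t + 1)

/-- `u` is the γ-harmonic extension of boundary data `φ` (zero-extension convention
outside `D ∪ ∂D`). -/
def IsSol (d n : ℕ) (γ : V d → V d → ℝ) (φ u : V d → ℝ) : Prop :=
  (∀ p, p ∉ Vset d n → u p = 0) ∧
  (∀ p ∈ Dset d n, lap d n γ u p = 0) ∧
  (∀ p ∈ Bset d n, u p = φ p)

/-- The Laplacian row vector `v_p`. -/
def vrow (d n : ℕ) (γ : V d → V d → ℝ) (p : V d) : V d → ℝ := fun q =>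
  if Adj d n p q then γ p q
  else if q = p then -(∑ r ∈ nbr d n p, γ p r) else 0

/-- Restriction of a function to a set (zero outside). -/
def rst {d : ℕ} (S : Set (V d)) (f : V d → ℝ) : V d → ℝ := fun q => if q ∈ S then f q else 0

/-- Euclidean inner product of (vertex-supported) functions. -/
def dot (d n : ℕ) (f g : V d → ℝ) : ℝ := ∑ p ∈ box d n, f p * g p

/-- The localized solution space `𝒰^{(t)}`: restrictions to `L_t^S ∪ J_t^S` of
harmonic extensions of boundary potentials in `ker T₁^{(t)}`. -/
def Uset (d n : ℕ) (γ : V d → V d → ℝ) (t : ℤ) : Set (V d → ℝ) :=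
  {u | (∀ p, p ∉ LS d n t ∪ JS d n t → u p = 0) ∧
    ∃ φ w : V d → ℝ, (∀ p, p ∉ JS d n t → φ p = 0) ∧ IsSol d n γ φ w ∧
      (∀ p ∈ L d n (t + 1), w p = 0) ∧ ∀ p ∈ LS d n t ∪ JS d n t, u p = w p}

/-- The set `E_t` of edges between the consecutive layers:
`E(K_t^-, L_{t+1}) ∪ E(L_t, K_{t+1}^+) ∪ E(L_t, L_{t+1})`. -/
def EdgeT (d n : ℕ) (t : ℤ) (p q : V d) : Prop :=
  Adj d n p q ∧
    ((p ∈ Km d n t ∧ q ∈ L d n (t + 1)) ∨ (q ∈ Km d n t ∧ p ∈ L d n (t + 1)) ∨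
     (p ∈ L d n t ∧ q ∈ Kp d n (t + 1)) ∨ (q ∈ L d n t ∧ p ∈ Kp d n (t + 1)) ∨
     (p ∈ L d n t ∧ q ∈ L d n (t + 1)) ∨ (q ∈ L d n t ∧ p ∈ L d n (t + 1)))

/-- The edge vector `J_p^u ∈ ℝ^{E_t}`, `J_p^u(pq) = u_p - u_q` on edges of `E_t`
incident to `p`, and `0` otherwise (as a symmetric function of edge endpoints). -/
def Jvec (d n : ℕ) (t : ℤ) (u : V d → ℝ) (p : V d) : V d → V d → ℝ := fun a b =>
  if EdgeT d n t a b then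
    (if a = p then u a - u b else if b = p then u b - u a else 0)
  else 0

/-- Inner product of edge functions. -/
def dotE (d n : ℕ) (f g : V d → V d → ℝ) : ℝ :=
  ∑ p ∈ box d n, ∑ q ∈ box d n, f p q * g p q

/-!
Every edge of `E_t` joins the lower layer `L_t ∪ K_t^-` to the upper layer `L_{t+1} ∪ K_{t+1}^+`.
Let `M` (`down γ` below) be the matrix with rows indexed by `L_{t+1}` whose row `p` carries the
conductivities of the edges from `p` down to level `t`. Pairing `w` with `J_p^u` for potentials
`u ∈ 𝒰^{(t)}` that vanish on `L_{t+1}` and equal a given `x ∈ ker M` on level `t` shows that `w`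
vanishes on the edges at `K_{t+1}^+`, that every row `w(p, ·)`, `p ∈ L_{t+1}`, is orthogonal to
`ker M`, and that so is the point mass at a lower node carrying the flux of `w` out of it. By unique
continuation for `M`, the rows are multiples `w(p, ·) = a_p M_p` and the fluxes vanish. The fluxes
are the entries of `a M`, so `a = 0` because the rows of `M` are independent. That independence, at
every level, is also what lets one build the potentials `u`: harmonic extensions are constructed
downwards one level at a time.
-/

end DiscreteCalderon

namespace Matrix

variable {K m n : Type*} [Field K] [Fintype m] [Fintype n]

theorem mulVec_surjective_of_vecMul_injective {M : Matrix m n K}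
    (h : Function.Injective M.vecMul) : Function.Surjective M.mulVec := by
  have hrank : M.rank = Module.finrank K (m → K) := by
    rw [rank_eq_finrank_span_row, finrank_span_eq_card (vecMul_injective_iff.1 h),
      Module.finrank_fintype_fun_eq_card]
  have htop : LinearMap.range M.mulVecLin = ⊤ := Submodule.eq_top_of_finrank_eq hrank
  intro b
  obtain ⟨x, hx⟩ := LinearMap.range_eq_top.1 htop b
  exact ⟨x, hx⟩

theorem exists_vecMul_eq_of_dotProduct_eq_zero {M : Matrix m n K} {z : n → K}
    (h : ∀ x, M *ᵥ x = 0 → z ⬝ᵥ x = 0) : ∃ y, y ᵥ* M = z := by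
  have hz : dotProductBilin K K z ∈ (LinearMap.ker M.mulVecLin).dualAnnihilator :=
    (Submodule.mem_dualAnnihilator _).2 fun x hx => h x hx
  rw [← LinearMap.range_dualMap_eq_dualAnnihilator_ker] at hz
  obtain ⟨φ, hφ⟩ := hz
  refine ⟨fun k => φ (Pi.single k 1), funext fun i => ?_⟩
  have hφx : ∀ v, φ v = ∑ k, v k * φ (Pi.single k 1) := fun v => by
    conv_lhs => rw [pi_eq_sum_univ' v]
    simp [map_sum]
  have := LinearMap.congr_fun hφ (Pi.single i 1)
  simp only [LinearMap.dualMap_apply, mulVecLin_apply, mulVec_single_one] at this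
  rw [hφx] at this
  simpa [vecMul, dotProduct, mul_comm, Pi.single_apply] using this

end Matrix

namespace Finset

variable {α β K : Type*} [Field K]

theorem exists_sum_mul_eq_of_rows_independent (R : Finset α) (C : Finset β) (M : α → β → K)
    (hM : ∀ y : α → K, (∀ q ∈ C, ∑ p ∈ R, y p * M p q = 0) → ∀ p ∈ R, y p = 0) (b : α → K) :
    ∃ x : β → K, ∀ p ∈ R, ∑ q ∈ C, M p q * x q = b p := by
  let M' : Matrix R C K := fun p q => M p q
  have hinj : Function.Injective M'.vecMul := by
    rw [← Matrix.coe_vecMulLinear, injective_iff_map_eq_zero]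
    intro y hy
    rw [Matrix.vecMulLinear_apply] at hy
    funext p
    have := hM (fun p => if h : p ∈ R then y ⟨p, h⟩ else 0) (fun q hq => by
      rw [← sum_coe_sort R]
      simpa [M', Matrix.vecMul, dotProduct] using congrFun hy ⟨q, hq⟩) p p.2
    simpa using this
  obtain ⟨x, hx⟩ := Matrix.mulVec_surjective_of_vecMul_injective hinj fun p => b p
  refine ⟨fun q => if h : q ∈ C then x ⟨q, h⟩ else 0, fun p hp => ?_⟩
  rw [← sum_coe_sort C]
  simpa [M', Matrix.mulVec, dotProduct] using congrFun hx ⟨p, hp⟩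

theorem exists_eq_sum_mul_of_orthogonal_kernel (R : Finset α) (C : Finset β) (M : α → β → K)
    (z : β → K)
    (hz : ∀ x : β → K, (∀ p ∈ R, ∑ q ∈ C, M p q * x q = 0) → ∑ q ∈ C, z q * x q = 0) :
    ∃ y : α → K, ∀ q ∈ C, z q = ∑ p ∈ R, y p * M p q := by
  let M' : Matrix R C K := fun p q => M p q
  obtain ⟨y, hy⟩ := Matrix.exists_vecMul_eq_of_dotProduct_eq_zero (M := M') (z := fun q => z q)
    fun x hx => by
      have := hz (fun q => if h : q ∈ C then x ⟨q, h⟩ else 0) fun p hp => by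
        rw [← sum_coe_sort C]
        simpa [M', Matrix.mulVec, dotProduct] using congrFun hx ⟨p, hp⟩
      rw [← sum_coe_sort C] at this
      simpa [dotProduct] using this
  refine ⟨fun p => if h : p ∈ R then y ⟨p, h⟩ else 0, fun q hq => ?_⟩
  rw [← sum_coe_sort R]
  simpa [M', Matrix.vecMul, dotProduct] using (congrFun hy ⟨q, hq⟩).symm

end Finset

namespace DiscreteCalderon

section Lattice

variable {d n : ℕ}

@[simp] lemma sum1_add_single (p : V d) (i : Fin d) : sum1 (p + Pi.single i 1) = sum1 p + 1 := by
  simp [sum1, sum_add_distrib]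

@[simp] lemma sum1_sub_single (p : V d) (i : Fin d) : sum1 (p - Pi.single i 1) = sum1 p - 1 := by
  simp [sum1, sum_sub_distrib]

lemma dist1_comm (p q : V d) : dist1 p q = dist1 q p := by
  simp only [dist1, abs_sub_comm]

lemma dist1_add_single (p : V d) (i : Fin d) : dist1 p (p + Pi.single i 1) = 1 := by
  simp [dist1, abs_neg, Pi.single_apply, apply_ite]

lemma dist1_sub_single (p : V d) (i : Fin d) : dist1 p (p - Pi.single i 1) = 1 := by
  simp [dist1, Pi.single_apply, apply_ite]

lemma exists_eq_add_single_or_eq_sub_single {p q : V d} (h : dist1 p q = 1) :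
    ∃ i, q = p + Pi.single i 1 ∨ q = p - Pi.single i 1 := by
  obtain ⟨i, hi⟩ : ∃ i, p i ≠ q i := by
    by_contra! hpq
    simp [dist1, hpq] at h
  have hsplit : |p i - q i| + ∑ j ∈ univ.erase i, |p j - q j| = 1 := by
    rw [add_sum_erase univ (fun j => |p j - q j|) (mem_univ i)]
    exact h
  have hi₁ : 1 ≤ |p i - q i| := Int.one_le_abs (sub_ne_zero.2 hi)
  have hrest_nonneg : 0 ≤ ∑ j ∈ univ.erase i, |p j - q j| := sum_nonneg fun j _ => abs_nonneg _
  have hrest : ∀ j ≠ i, p j = q j := fun j hj => by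
    have := single_le_sum (f := fun j => |p j - q j|) (fun j _ => abs_nonneg _)
      (mem_erase.2 ⟨hj, mem_univ j⟩)
    exact sub_eq_zero.1 (abs_eq_zero.1 (by linarith [abs_nonneg (p j - q j)]))
  refine ⟨i, ?_⟩
  rcases abs_eq zero_le_one |>.1 (show |p i - q i| = 1 by linarith) with h₁ | h₁
  · right
    funext j
    by_cases hj : j = i
    · subst hj; simp; omega
    · simp [hj, hrest j hj]
  · left
    funext j
    by_cases hj : j = i
    · subst hj; simp; omega
    · simp [hj, hrest j hj]

lemma eq_add_single_of_dist1 {p q : V d} (h : dist1 p q = 1) (hs : sum1 q = sum1 p + 1) :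
    ∃ i, q = p + Pi.single i 1 := by
  obtain ⟨i, rfl | rfl⟩ := exists_eq_add_single_or_eq_sub_single h
  · exact ⟨i, rfl⟩
  · simp at hs; omega

lemma mem_Vset_of_dist1 {p q : V d} (hp : p ∈ Dset d n) (h : dist1 p q = 1) : q ∈ Vset d n := by
  by_cases hq : q ∈ Dset d n
  · exact Or.inl hq
  · exact Or.inr ⟨hq, p, hp, by rw [dist1_comm, h]⟩

lemma adj_sub_single {p : V d} (hp : p ∈ Dset d n) (i : Fin d) : Adj d n p (p - Pi.single i 1) :=
  ⟨dist1_sub_single p i, Or.inl hp, mem_Vset_of_dist1 hp (dist1_sub_single p i), Or.inl hp⟩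

lemma adj_comm {p q : V d} (h : Adj d n p q) : Adj d n q p :=
  ⟨by rw [dist1_comm, h.1], h.2.2.1, h.2.1, h.2.2.2.symm⟩

lemma mem_box_iff {x : V d} : x ∈ box d n ↔ ∀ i, 0 ≤ x i ∧ x i ≤ n + 1 := by
  simp [box]

lemma mem_box_of_mem_Dset {x : V d} (h : x ∈ Dset d n) : x ∈ box d n :=
  mem_box_iff.2 fun i => ⟨by linarith [(h i).1], by linarith [(h i).2]⟩

lemma mem_box_of_mem_Bset {x : V d} (h : x ∈ Bset d n) : x ∈ box d n := by
  obtain ⟨-, q, hq, hxq⟩ := h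
  obtain ⟨i, rfl | rfl⟩ := exists_eq_add_single_or_eq_sub_single (by rwa [dist1_comm] at hxq)
  all_goals
    refine mem_box_iff.2 fun j => ?_
    have := hq j
    by_cases hj : j = i
    · subst hj; simp; omega
    · simp [hj]; omega

lemma mem_box_of_mem_Vset {x : V d} (h : x ∈ Vset d n) : x ∈ box d n :=
  h.elim mem_box_of_mem_Dset mem_box_of_mem_Bset

lemma exists_eq_zero_or_eq_of_mem_Bset {x : V d} (h : x ∈ Bset d n) :
    ∃ i, x i = 0 ∨ x i = n + 1 := by
  obtain ⟨i, hi⟩ : ∃ i, ¬(1 ≤ x i ∧ x i ≤ n) := by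
    by_contra! hx
    exact h.1 fun i => ⟨(hx i).1, (hx i).2⟩
  have := mem_box_iff.1 (mem_box_of_mem_Bset h) i
  exact ⟨i, by omega⟩

lemma sub_single_not_mem_Kp {p : V d} (hp : p ∈ Dset d n) (i : Fin d) (s : ℤ) :
    p - Pi.single i 1 ∉ Kp d n s := by
  rintro ⟨-, j, hj⟩
  have := (hp j).2
  by_cases hji : j = i
  · subst hji; simp at hj; omega
  · simp [hji] at hj; omega

lemma eq_sub_single_of_dist1 {p q : V d} {i : Fin d} (hpi : p i = n + 1) (hq : q ∈ Dset d n)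
    (h : dist1 p q = 1) : q = p - Pi.single i 1 := by
  obtain ⟨j, rfl | rfl⟩ := exists_eq_add_single_or_eq_sub_single h
  all_goals
    have := (hq i).2
    by_cases hji : j = i
  · subst hji; simp at this; omega
  · simp [Ne.symm hji] at this; omega
  · rw [hji]
  · simp [Ne.symm hji] at this; omega

lemma sub_single_add_single_ne (p : V d) {j m : Fin d} (hmj : m ≠ j) :
    p - Pi.single j 1 + Pi.single m 1 ≠ p := fun h => by
  simpa [hmj] using congrFun h m

lemma toLex_lt_add_single_sub_single (p : V d) {i j : Fin d} (hij : i < j) :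
    toLex p < toLex (p + Pi.single i 1 - Pi.single j 1) :=
  ⟨i, fun k hk => by simp [hk.ne, (hk.trans hij).ne], by simp [hij.ne]⟩

end Lattice

section Down

variable {d n : ℕ} {γ : V d → V d → ℝ}

def down (γ : V d → V d → ℝ) (p q : V d) : ℝ :=
  if ∃ i, p = q + Pi.single i 1 then γ q p else 0

lemma exists_eq_add_single_of_down_ne_zero {p q : V d} (h : down γ p q ≠ 0) :
    ∃ i, p = q + Pi.single i 1 := by
  by_contra hpq
  exact h (if_neg hpq)

lemma down_sub_single (p : V d) (i : Fin d) :
    down γ p (p - Pi.single i 1) = γ (p - Pi.single i 1) p :=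
  if_pos ⟨i, (sub_add_cancel p _).symm⟩

lemma down_sub_single_pos (hγ : GoodCond d n γ) {p : V d} (hp : p ∈ Dset d n) (i : Fin d) :
    0 < down γ p (p - Pi.single i 1) := by
  rw [down_sub_single, hγ.1]
  exact hγ.2 _ _ (adj_sub_single hp i)

lemma lap_add (F G : V d → ℝ) (p : V d) :
    lap d n γ (F + G) p = lap d n γ F p + lap d n γ G p := by
  simp only [lap, ← sum_add_distrib, Pi.add_apply]
  exact sum_congr rfl fun q _ => by ring

lemma lap_congr {F G : V d → ℝ} {p : V d} (hp : F p = G p)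
    (hnbr : ∀ q, dist1 p q = 1 → F q = G q) : lap d n γ F p = lap d n γ G p :=
  sum_congr rfl fun q hq => by rw [hp, hnbr q (mem_filter.1 hq).2.1]

lemma lap_eq_zero {F : V d → ℝ} {p : V d} (hp : F p = 0)
    (hnbr : ∀ q, dist1 p q = 1 → F q = 0) : lap d n γ F p = 0 := by
  rw [lap_congr (G := 0) hp hnbr]
  simp [lap]

lemma lap_eq_sum_down {F : V d → ℝ} {p : V d} (hp : p ∈ Dset d n)
    (hF : ∀ x, sum1 x ≠ sum1 p - 1 → F x = 0) :
    lap d n γ F p = ∑ q ∈ box d n, down γ p q * F q := by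
  rw [lap, nbr, sum_filter]
  refine sum_congr rfl fun q _ => ?_
  have hFp : F p = 0 := hF p (by omega)
  by_cases hq : sum1 q = sum1 p - 1
  · have hadj : Adj d n p q ↔ ∃ i, p = q + Pi.single i 1 := by
      constructor
      · intro h
        exact eq_add_single_of_dist1 (by rw [dist1_comm, h.1]) (by omega)
      · rintro ⟨i, rfl⟩
        simpa using adj_sub_single hp i
    simp only [down, hadj, hFp, sub_zero]
    split_ifs <;> simp
  · simp [hF q hq, hFp]

def Lfin (d n : ℕ) (s : ℤ) : Finset (V d) := (box d n).filter (· ∈ L d n s)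

lemma mem_Lfin {s : ℤ} {p : V d} : p ∈ Lfin d n s ↔ p ∈ L d n s :=
  mem_filter.trans ⟨fun h => h.2, fun h => ⟨mem_box_of_mem_Dset h.1, h⟩⟩

def downKer (d n : ℕ) (γ : V d → V d → ℝ) (s : ℤ) : Set (V d → ℝ) :=
  {x | ∀ p ∈ L d n s, ∑ q ∈ box d n, down γ p q * x q = 0}

end Down

section UniqueContinuation

variable {d n : ℕ} {γ : V d → V d → ℝ} {s : ℤ}

lemma sum_mul_down_sub_single {A : V d → ℝ} {P : V d} (hP : P ∈ Lfin d n s) (j : Fin d)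
    (hiso : ∀ m ≠ j, P - Pi.single j 1 + Pi.single m 1 ∈ Lfin d n s →
      A (P - Pi.single j 1 + Pi.single m 1) = 0) :
    ∑ p ∈ Lfin d n s, A p * down γ p (P - Pi.single j 1) = A P * γ (P - Pi.single j 1) P := by
  rw [sum_eq_single_of_mem P hP, down_sub_single]
  intro p hp hpP
  by_cases hdown : down γ p (P - Pi.single j 1) = 0
  · rw [hdown, mul_zero]
  obtain ⟨m, rfl⟩ := exists_eq_add_single_of_down_ne_zero hdown
  have hmj : m ≠ j := by
    rintro rfl
    exact hpP (sub_add_cancel P _)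
  rw [hiso m hmj hp, zero_mul]

lemma exists_eq_of_isolated_column (hγ : GoodCond d n γ) {p₀ : V d} {A : V d → ℝ}
    (hA : ∀ q ∈ box d n, ∑ p ∈ Lfin d n s, A p * down γ p q ≠ 0 → ∃ i, p₀ = q + Pi.single i 1)
    {P : V d} (hP : P ∈ Lfin d n s) (hAP : A P ≠ 0) (j : Fin d)
    (hiso : ∀ m ≠ j, P - Pi.single j 1 + Pi.single m 1 ∈ Lfin d n s →
      A (P - Pi.single j 1 + Pi.single m 1) = 0) :
    ∃ m, p₀ = P - Pi.single j 1 + Pi.single m 1 := by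
  refine hA _ (mem_box_of_mem_Vset (adj_sub_single (mem_Lfin.1 hP).1 j).2.2.1) ?_
  rw [sum_mul_down_sub_single hP j hiso, ← down_sub_single (γ := γ)]
  exact mul_ne_zero hAP (down_sub_single_pos hγ (mem_Lfin.1 hP).1 j).ne'

/-- Unique continuation: the lexicographically extreme rows of the support of `A` each own a
column that no other row of the level reaches. -/
lemma eq_zero_of_sum_mul_down_ne_zero (hγ : GoodCond d n γ) (hd : 0 < d) {p₀ : V d}
    (A : V d → ℝ) (hA : ∀ q ∈ box d n, ∑ p ∈ Lfin d n s, A p * down γ p q ≠ 0 →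
      ∃ i, p₀ = q + Pi.single i 1) :
    ∀ p ∈ Lfin d n s, p ≠ p₀ → A p = 0 := by
  by_contra! ⟨p₁, hp₁, hp₁p₀, hAp₁⟩
  set S := insert p₀ ((Lfin d n s).filter (A · ≠ 0))
  have hp₁S : p₁ ∈ S := mem_insert_of_mem (mem_filter.2 ⟨hp₁, hAp₁⟩)
  have hcol : ∀ P ∈ S, P ≠ p₀ → ∀ j, (∀ m ≠ j, P - Pi.single j 1 + Pi.single m 1 ∉ S) →
      ∃ m, p₀ = P - Pi.single j 1 + Pi.single m 1 := fun P hPS hPp₀ j hiso => by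
    obtain ⟨hP, hAP⟩ := mem_filter.1 ((mem_insert.1 hPS).resolve_left hPp₀)
    exact exists_eq_of_isolated_column hγ hA hP hAP j fun m hm hmL => by_contra fun h =>
      hiso m hm (mem_insert_of_mem (mem_filter.2 ⟨hmL, h⟩))
  obtain ⟨P, hPS, hPmax⟩ := S.exists_max_image toLex ⟨p₁, hp₁S⟩
  obtain ⟨Q, hQS, hQmin⟩ := S.exists_min_image toLex ⟨p₁, hp₁S⟩
  by_cases hPp₀ : P = p₀
  · have hQp₀ : Q ≠ p₀ := by
      rintro rfl
      exact hp₁p₀ (toLex.injective (le_antisymm (hPp₀ ▸ hPmax p₁ hp₁S) (hQmin p₁ hp₁S)))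
    have hlt : ∀ m ≠ (⟨0, hd⟩ : Fin d),
        toLex (Q - Pi.single ⟨0, hd⟩ 1 + Pi.single m 1) < toLex Q := fun m hm => by
      have := toLex_lt_add_single_sub_single (Q - Pi.single ⟨0, hd⟩ 1 + Pi.single m 1)
        (show (⟨0, hd⟩ : Fin d) < m from Fin.lt_def.2 (Nat.pos_of_ne_zero fun h => hm (Fin.ext h)))
      rwa [show Q - Pi.single ⟨0, hd⟩ 1 + Pi.single m 1 + Pi.single ⟨0, hd⟩ 1 - Pi.single m 1
        = Q by abel] at this
    obtain ⟨m, hm⟩ := hcol Q hQS hQp₀ ⟨0, hd⟩ fun m hm hmS => (hQmin _ hmS).not_gt (hlt m hm)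
    by_cases hm0 : m = ⟨0, hd⟩
    · exact hQp₀ (by rw [hm, hm0, sub_add_cancel])
    · exact (hQmin p₀ (mem_insert_self _ _)).not_gt (hm ▸ hlt m hm0)
  · have hlast : d - 1 < d := by omega
    have hlt : ∀ m ≠ (⟨d - 1, hlast⟩ : Fin d),
        toLex P < toLex (P - Pi.single ⟨d - 1, hlast⟩ 1 + Pi.single m 1) := fun m hm => by
      have := toLex_lt_add_single_sub_single P
        (lt_of_le_of_ne (Fin.le_def.2 (by have := m.isLt; simp; omega)) hm)
      rwa [add_sub_right_comm] at this
    obtain ⟨m, hm⟩ := hcol P hPS hPp₀ ⟨d - 1, hlast⟩ fun m hm hmS => (hPmax _ hmS).not_gt (hlt m hm)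
    by_cases hml : m = ⟨d - 1, hlast⟩
    · exact hPp₀ (by rw [hm, hml, sub_add_cancel])
    · exact (hPmax p₀ (mem_insert_self _ _)).not_gt (hm ▸ hlt m hml)

lemma eq_zero_of_sum_mul_down_eq_zero (hγ : GoodCond d n γ) (hd : 0 < d) (A : V d → ℝ)
    (hA : ∀ q ∈ box d n, ∑ p ∈ Lfin d n s, A p * down γ p q = 0) :
    ∀ p ∈ Lfin d n s, A p = 0 := by
  intro p hp
  have hzero := eq_zero_of_sum_mul_down_ne_zero hγ hd (p₀ := p) A fun q hq h => absurd (hA q hq) h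
  have hp' := (mem_Lfin.1 hp).1
  have := hA _ (mem_box_of_mem_Vset (adj_sub_single hp' ⟨0, hd⟩).2.2.1)
  rw [sum_mul_down_sub_single hp _ fun m hm hmL => hzero _ hmL (sub_single_add_single_ne p hm)]
    at this
  rw [← down_sub_single (γ := γ)] at this
  exact (mul_eq_zero.1 this).resolve_right (down_sub_single_pos hγ hp' _).ne'

lemma exists_eq_mul_down (hγ : GoodCond d n γ) (hd : 0 < d) {p₀ : V d} (hp₀ : p₀ ∈ L d n s)
    (z : V d → ℝ) (hz : ∀ q, z q ≠ 0 → ∃ i, p₀ = q + Pi.single i 1)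
    (horth : ∀ x ∈ downKer d n γ s, ∑ q ∈ box d n, z q * x q = 0) :
    ∃ a : ℝ, ∀ q ∈ box d n, z q = a * down γ p₀ q := by
  obtain ⟨A, hA⟩ := exists_eq_sum_mul_of_orthogonal_kernel (Lfin d n s) (box d n) (down γ) z
    fun x hx => horth x fun p hp => hx p (mem_Lfin.2 hp)
  have hzero := eq_zero_of_sum_mul_down_ne_zero hγ hd A fun q hq h => hz q (by rwa [hA q hq])
  refine ⟨A p₀, fun q hq => ?_⟩
  rw [hA q hq, sum_eq_single_of_mem p₀ (mem_Lfin.2 hp₀) fun p hp hpp₀ => by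
    rw [hzero p hp hpp₀, zero_mul]]

end UniqueContinuation

section Extension

variable {d n : ℕ} {γ : V d → V d → ℝ}

def level (d n : ℕ) (s : ℤ) : Set (V d) := {x | x ∈ Vset d n ∧ sum1 x = s}

lemma sum_down_mul_rst_level {p : V d} (hp : p ∈ Dset d n) {s : ℤ} (hs : sum1 p = s + 1)
    (x : V d → ℝ) :
    ∑ q ∈ box d n, down γ p q * rst (level d n s) x q = ∑ q ∈ box d n, down γ p q * x q := by
  refine sum_congr rfl fun q _ => ?_
  by_cases hdown : down γ p q = 0
  · simp [hdown]
  obtain ⟨i, rfl⟩ := exists_eq_add_single_of_down_ne_zero hdown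
  have hq : q ∈ Vset d n := by simpa using (adj_sub_single hp i).2.2.1
  rw [rst, if_pos ⟨hq, by simp at hs; omega⟩]

lemma exists_lap_eq (hγ : GoodCond d n γ) (hd : 0 < d) (s : ℤ) (b : V d → ℝ) :
    ∃ F : V d → ℝ, (∀ x ∉ level d n (s - 1), F x = 0) ∧ ∀ p ∈ L d n s, lap d n γ F p = b p := by
  obtain ⟨x, hx⟩ := exists_sum_mul_eq_of_rows_independent (Lfin d n s) (box d n) (down γ)
    (eq_zero_of_sum_mul_down_eq_zero hγ hd) b
  refine ⟨rst (level d n (s - 1)) x, fun q hq => if_neg hq, fun p hp => ?_⟩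
  rw [lap_eq_sum_down (F := rst (level d n (s - 1)) x) hp.1
      fun q hq => if_neg fun h => hq (h.2.trans (by rw [hp.2])),
    sum_down_mul_rst_level hp.1 (by rw [hp.2]; ring), hx p (mem_Lfin.2 hp)]

lemma exists_harmonic_below (hγ : GoodCond d n γ) (hd : 0 < d) (t : ℤ) (W₀ : V d → ℝ)
    (hW₀ : ∀ x ∉ Vset d n, W₀ x = 0) :
    ∃ W : V d → ℝ, (∀ x ∉ Vset d n, W x = 0) ∧ (∀ x, t ≤ sum1 x → W x = W₀ x) ∧
      ∀ p ∈ Dset d n, sum1 p ≤ t → lap d n γ W p = 0 := by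
  have hsweep : ∀ s ≤ t + 1, ∃ W : V d → ℝ, (∀ x ∉ Vset d n, W x = 0) ∧
      (∀ x, t ≤ sum1 x → W x = W₀ x) ∧
      ∀ p ∈ Dset d n, s ≤ sum1 p → sum1 p ≤ t → lap d n γ W p = 0 := by
    intro s hs
    induction s, hs using Int.leInductionDown with
    | base => exact ⟨W₀, hW₀, fun _ _ => rfl, fun p _ h₁ h₂ => absurd h₂ (by omega)⟩
    | pred s hs ih =>
      obtain ⟨W, hWV, hWt, hWlap⟩ := ih
      obtain ⟨F, hFsupp, hFlap⟩ := exists_lap_eq hγ hd (s - 1) (-lap d n γ W)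
      have hF : ∀ x, sum1 x ≠ s - 1 - 1 → F x = 0 := fun x hx => hFsupp x fun h => hx h.2
      refine ⟨W + F, fun x hx => ?_, fun x hx => ?_, fun p hp h₁ h₂ => ?_⟩
      · simp [hWV x hx, hFsupp x fun h => hx h.1]
      · simp [hWt x hx, hF x (by omega)]
      · rw [lap_add]
        rcases eq_or_lt_of_le h₁ with h | h
        · simp [hFlap p ⟨hp, h.symm⟩]
        · rw [hWlap p hp (by omega) h₂, lap_eq_zero (hF p (by omega)) fun q hq => hF q ?_,
            add_zero]
          obtain ⟨i, rfl | rfl⟩ := exists_eq_add_single_or_eq_sub_single hq <;> simp <;> omega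
  obtain ⟨W, hWV, hWt, hWlap⟩ := hsweep (min 0 (t + 1)) (min_le_right _ _)
  refine ⟨W, hWV, hWt, fun p hp h => hWlap p hp ?_ h⟩
  exact (min_le_left _ _).trans (sum_nonneg fun i _ => by linarith [(hp i).1])

lemma mem_JS_of_mem_Bset {t : ℤ} {q : V d} (hq : q ∈ Bset d n) (ht : sum1 q ≤ t) :
    q ∈ JS d n t := by
  obtain ⟨i, h | h⟩ := exists_eq_zero_or_eq_of_mem_Bset hq
  · exact Or.inl ⟨hq, ht, i, h⟩
  · exact Or.inr ⟨hq, by omega, i, h⟩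

lemma lap_rst_add_rst_eq_zero {t : ℤ} {x : V d → ℝ} (hx : x ∈ downKer d n γ (t + 1))
    (ψ : V d → ℝ) {p : V d} (hp : p ∈ Dset d n) (hpt : t < sum1 p) :
    lap d n γ (rst (level d n t) x + rst (Kp d n (t + 1)) ψ) p = 0 := by
  have hX : ∀ q, sum1 q ≠ t → rst (level d n t) x q = 0 := fun q hq => if_neg fun h => hq h.2
  rw [lap_add, lap_eq_zero (F := rst (Kp d n (t + 1)) ψ) (if_neg fun h => h.1.1.1 hp)
    fun q hq => if_neg ?_, add_zero]
  · rcases (show t + 1 ≤ sum1 p by omega).eq_or_lt with h | h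
    · rw [lap_eq_sum_down hp fun q hq => hX q (by rw [← h] at hq; simpa using hq),
        sum_down_mul_rst_level hp h.symm]
      exact hx p ⟨hp, h.symm⟩
    · refine lap_eq_zero (hX p (by omega)) fun q hq => hX q ?_
      obtain ⟨i, rfl | rfl⟩ := exists_eq_add_single_or_eq_sub_single hq <;> simp <;> omega
  · obtain ⟨i, rfl | rfl⟩ := exists_eq_add_single_or_eq_sub_single hq
    · exact fun h => by have := h.1.2; simp at this; omega
    · exact sub_single_not_mem_Kp hp i _

lemma exists_harmonic_extension (hγ : GoodCond d n γ) (hd : 0 < d) {t : ℤ} {x : V d → ℝ}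
    (hx : x ∈ downKer d n γ (t + 1)) (ψ : V d → ℝ) :
    ∃ W : V d → ℝ, (∀ q ∉ Vset d n, W q = 0) ∧ (∀ p ∈ Dset d n, lap d n γ W p = 0) ∧
      ∀ q, t ≤ sum1 q → W q = rst (level d n t) x q + rst (Kp d n (t + 1)) ψ q := by
  obtain ⟨W, hWV, hWt, hWlap⟩ := exists_harmonic_below hγ hd t
    (rst (level d n t) x + rst (Kp d n (t + 1)) ψ) fun q hq => by
      rw [Pi.add_apply, rst, rst, if_neg fun h => hq h.1, if_neg fun h => hq (Or.inr h.1.1),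
        add_zero]
  refine ⟨W, hWV, fun p hp => ?_, hWt⟩
  by_cases hpt : sum1 p ≤ t
  · exact hWlap p hp hpt
  have hnbr : ∀ q, dist1 p q = 1 → t ≤ sum1 q := fun q hq => by
    obtain ⟨i, rfl | rfl⟩ := exists_eq_add_single_or_eq_sub_single hq <;> simp <;> omega
  rw [lap_congr (hWt p (by omega)) fun q hq => hWt q (hnbr q hq)]
  exact lap_rst_add_rst_eq_zero hx ψ hp (by omega)

lemma exists_mem_Uset (hγ : GoodCond d n γ) (hd : 0 < d) (t : ℤ) {x : V d → ℝ}
    (hx : x ∈ downKer d n γ (t + 1)) (ψ : V d → ℝ) :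
    ∃ u ∈ Uset d n γ t, (∀ q ∈ level d n t, u q = x q) ∧ (∀ q ∈ Kp d n (t + 1), u q = ψ q) ∧
      ∀ q ∈ L d n (t + 1), u q = 0 := by
  obtain ⟨W, hWV, hlap, hWt⟩ := exists_harmonic_extension hγ hd hx ψ
  have hX : ∀ q, sum1 q ≠ t → rst (level d n t) x q = 0 := fun q hq => if_neg fun h => hq h.2
  have hW_bdry : ∀ q ∈ Bset d n, q ∉ JS d n t → W q = 0 := fun q hq hqJ => by
    have ht : t < sum1 q := not_le.1 fun h => hqJ (mem_JS_of_mem_Bset hq h)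
    rw [hWt q ht.le, hX q ht.ne', rst, if_neg fun h => hqJ (Or.inr ⟨hq, h.1.2.le, h.2⟩),
      add_zero]
  have hmem : ∀ q ∈ level d n t, q ∈ LS d n t ∪ JS d n t := fun q ⟨hqV, hq⟩ =>
    hqV.elim (fun h => Or.inl ⟨h, hq.le⟩) fun h => Or.inr (mem_JS_of_mem_Bset h hq.le)
  refine ⟨rst (LS d n t ∪ JS d n t) W, ⟨fun p hp => if_neg hp, rst (Bset d n) W, W, ?_,
    ⟨hWV, hlap, fun p hp => (if_pos hp).symm⟩, ?_, fun p hp => if_pos hp⟩, ?_, ?_, ?_⟩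
  · intro p hp
    by_cases hpB : p ∈ Bset d n
    · rw [rst, if_pos hpB, hW_bdry p hpB hp]
    · exact if_neg hpB
  · intro p hp
    rw [hWt p (by rw [hp.2]; omega), hX p (by rw [hp.2]; omega), rst,
      if_neg fun h => h.1.1.1 hp.1, add_zero]
  · intro q hq
    rw [rst, if_pos (hmem q hq), hWt q hq.2.ge, rst, if_pos hq, rst,
      if_neg fun h => by have := h.1.2; have := hq.2; omega, add_zero]
  · intro q hq
    have hqJ : q ∈ LS d n t ∪ JS d n t := Or.inr (Or.inr ⟨hq.1.1, hq.1.2.le, hq.2⟩)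
    rw [rst, if_pos hqJ, hWt q (by rw [hq.1.2]; omega), hX q (by rw [hq.1.2]; omega), rst,
      if_pos hq, zero_add]
  · intro q hq
    refine if_neg ?_
    rintro (h | h | h)
    · have := h.2; have := hq.2; omega
    · exact h.1.1 hq.1
    · exact h.1.1 hq.1

end Extension

section Layers

variable {d n : ℕ} {t : ℤ}

def lowerLayer (d n : ℕ) (t : ℤ) : Set (V d) := L d n t ∪ Km d n t

def upperLayer (d n : ℕ) (t : ℤ) : Set (V d) := L d n (t + 1) ∪ Kp d n (t + 1)

lemma EdgeT.symm {a b : V d} (h : EdgeT d n t a b) : EdgeT d n t b a :=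
  ⟨adj_comm h.1, by have := h.2; tauto⟩

lemma EdgeT.mem_layers {a b : V d} (h : EdgeT d n t a b) :
    a ∈ lowerLayer d n t ∧ b ∈ upperLayer d n t ∨ b ∈ lowerLayer d n t ∧ a ∈ upperLayer d n t := by
  have := h.2
  simp only [lowerLayer, upperLayer, Set.mem_union]
  tauto

lemma sum1_of_mem_lowerLayer {q : V d} (h : q ∈ lowerLayer d n t) : sum1 q = t :=
  h.elim (·.2) (·.1.2)

lemma sum1_of_mem_upperLayer {q : V d} (h : q ∈ upperLayer d n t) : sum1 q = t + 1 :=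
  h.elim (·.2) (·.1.2)

lemma EdgeT.mem_upperLayer {a b : V d} (h : EdgeT d n t a b) (ha : a ∈ lowerLayer d n t) :
    b ∈ upperLayer d n t := by
  rcases h.mem_layers with ⟨-, hb⟩ | ⟨-, ha'⟩
  · exact hb
  · have := sum1_of_mem_lowerLayer ha; have := sum1_of_mem_upperLayer ha'; omega

lemma EdgeT.mem_lowerLayer {a b : V d} (h : EdgeT d n t a b) (ha : a ∈ upperLayer d n t) :
    b ∈ lowerLayer d n t := by
  rcases h.mem_layers with ⟨ha', -⟩ | ⟨hb, -⟩
  · have := sum1_of_mem_lowerLayer ha'; have := sum1_of_mem_upperLayer ha; omega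
  · exact hb

lemma EdgeT.mem_level {a b : V d} (h : EdgeT d n t a b) (ha : a ∈ upperLayer d n t) :
    b ∈ level d n t :=
  ⟨h.1.2.2.1, sum1_of_mem_lowerLayer (h.mem_lowerLayer ha)⟩

lemma EdgeT.exists_eq_add_single {a b : V d} (h : EdgeT d n t a b) (ha : a ∈ upperLayer d n t) :
    ∃ i, a = b + Pi.single i 1 :=
  eq_add_single_of_dist1 (by rw [dist1_comm, h.1.1])
    (by rw [sum1_of_mem_upperLayer ha, sum1_of_mem_lowerLayer (h.mem_lowerLayer ha)])

lemma EdgeT.eq_of_mem_Kp {a b b' : V d} (h : EdgeT d n t a b) (h' : EdgeT d n t a b')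
    (ha : a ∈ Kp d n (t + 1)) : b = b' := by
  obtain ⟨i, hi⟩ := ha.2
  have hD : ∀ {c}, EdgeT d n t a c → c ∈ Dset d n := fun hc =>
    hc.1.2.2.2.resolve_left ha.1.1.1
  rw [eq_sub_single_of_dist1 hi (hD h) h.1.1, eq_sub_single_of_dist1 hi (hD h') h'.1.1]

lemma dotE_Jvec {w : V d → V d → ℝ} (hsym : ∀ a b, w a b = w b a)
    (hsupp : ∀ a b, ¬ EdgeT d n t a b → w a b = 0) (u : V d → ℝ) {p : V d} (hp : p ∈ box d n) :
    dotE d n (Jvec d n t u p) w = 2 * ∑ q ∈ box d n, (u p - u q) * w p q := by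
  have hterm : ∀ a b, Jvec d n t u p a b * w a b =
      (if a = p then (u p - u b) * w p b else 0) + (if b = p then (u p - u a) * w p a else 0) := by
    intro a b
    unfold Jvec
    by_cases ha : a = p
    · subst ha
      by_cases hb : b = a
      · subst hb
        simp
      · simp only [if_neg hb, add_zero]
        split_ifs with he
        · rfl
        · simp [hsupp a b he]
    · by_cases hb : b = p
      · subst hb
        simp only [if_neg ha, zero_add, hsym a b]
        split_ifs with he
        · rfl
        · simp [← hsym a b, hsupp a b he]
      · simp [ha, hb]
  simp only [dotE, hterm, sum_add_distrib, sum_ite_eq', sum_ite_irrel, sum_const_zero, if_pos hp]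
  ring

end Layers

structure IsJOrthogonal (d n : ℕ) (γ : V d → V d → ℝ) (t : ℤ) (w : V d → V d → ℝ) : Prop where
  symm : ∀ a b, w a b = w b a
  eq_zero_of_not_edgeT : ∀ a b, ¬ EdgeT d n t a b → w a b = 0
  dotE_eq_zero : ∀ u ∈ Uset d n γ t, ∀ p ∈ L d n t ∪ L d n (t + 1) ∪ Jslice d n t,
    dotE d n (Jvec d n t u p) w = 0

namespace IsJOrthogonal

variable {d n : ℕ} {γ : V d → V d → ℝ} {t : ℤ} {w : V d → V d → ℝ}

lemma edgeT_of_ne_zero (hw : IsJOrthogonal d n γ t w) {a b : V d} (h : w a b ≠ 0) :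
    EdgeT d n t a b :=
  by_contra fun he => h (hw.eq_zero_of_not_edgeT a b he)

lemma sum_sub_mul_eq_zero (hw : IsJOrthogonal d n γ t w) {u : V d → ℝ} (hu : u ∈ Uset d n γ t)
    {p : V d} (hp : p ∈ L d n t ∪ L d n (t + 1) ∪ Jslice d n t) :
    ∑ q ∈ box d n, (u p - u q) * w p q = 0 := by
  have hpV : p ∈ Vset d n := by
    rcases hp with (h | h) | h | h
    exacts [Or.inl h.1, Or.inl h.1, Or.inr h.1.1, Or.inr h.1.1]
  have := hw.dotE_eq_zero u hu p hp
  rw [dotE_Jvec hw.symm hw.eq_zero_of_not_edgeT u (mem_box_of_mem_Vset hpV)] at this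
  linarith

lemma eq_zero_of_mem_Kp (hw : IsJOrthogonal d n γ t w) (hγ : GoodCond d n γ) (hd : 0 < d)
    {p : V d} (hp : p ∈ Kp d n (t + 1)) (q : V d) : w p q = 0 := by
  obtain ⟨u, hu, hu_level, hu_Kp, -⟩ :=
    exists_mem_Uset hγ hd t (x := 0) (fun p _ => by simp) fun _ => 1
  have hpair := hw.sum_sub_mul_eq_zero hu (Or.inr (Or.inr hp))
  by_contra hpq
  have he := hw.edgeT_of_ne_zero hpq
  rw [sum_eq_single_of_mem q (mem_box_of_mem_Vset he.1.2.2.1) fun q' _ hq' => by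
    by_contra h
    exact hq' ((hw.edgeT_of_ne_zero (right_ne_zero_of_mul h)).eq_of_mem_Kp he hp)] at hpair
  rw [hu_Kp p hp, hu_level q (he.mem_level (Or.inr hp))] at hpair
  simp [hpq] at hpair

lemma sum_mul_eq_zero_of_mem_L (hw : IsJOrthogonal d n γ t w) (hγ : GoodCond d n γ) (hd : 0 < d)
    {p : V d} (hp : p ∈ L d n (t + 1)) {x : V d → ℝ} (hx : x ∈ downKer d n γ (t + 1)) :
    ∑ q ∈ box d n, w p q * x q = 0 := by
  obtain ⟨u, hu, hu_level, -, hu_L⟩ := exists_mem_Uset hγ hd t hx 0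
  have hpair := hw.sum_sub_mul_eq_zero hu (Or.inl (Or.inr hp))
  rw [← neg_eq_zero, ← hpair, ← sum_neg_distrib]
  refine sum_congr rfl fun q _ => ?_
  by_cases hpq : w p q = 0
  · simp [hpq]
  rw [hu_L p hp, hu_level q ((hw.edgeT_of_ne_zero hpq).mem_level (Or.inl hp))]
  ring

lemma mul_sum_eq_zero_of_mem_lowerLayer (hw : IsJOrthogonal d n γ t w) (hγ : GoodCond d n γ)
    (hd : 0 < d) {q : V d} (hq : q ∈ lowerLayer d n t) {x : V d → ℝ}
    (hx : x ∈ downKer d n γ (t + 1)) : x q * ∑ p ∈ box d n, w q p = 0 := by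
  obtain ⟨u, hu, hu_level, hu_Kp, hu_L⟩ := exists_mem_Uset hγ hd t hx 0
  have hqV : q ∈ Vset d n := hq.elim (fun h => Or.inl h.1) fun h => Or.inr h.1.1
  have hpair := hw.sum_sub_mul_eq_zero hu (hq.elim (fun h => Or.inl (Or.inl h))
    fun h => Or.inr (Or.inl h))
  rw [mul_sum, ← hpair]
  refine sum_congr rfl fun p _ => ?_
  by_cases hqp : w q p = 0
  · simp [hqp]
  have hup : u p = 0 := ((hw.edgeT_of_ne_zero hqp).mem_upperLayer hq).elim (hu_L p) (hu_Kp p)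
  rw [hup, hu_level q ⟨hqV, sum1_of_mem_lowerLayer hq⟩, sub_zero]

lemma exists_eq_mul_down_of_mem_L (hw : IsJOrthogonal d n γ t w) (hγ : GoodCond d n γ)
    (hd : 0 < d) {p : V d} (hp : p ∈ L d n (t + 1)) :
    ∃ a : ℝ, ∀ q ∈ box d n, w p q = a * down γ p q :=
  exists_eq_mul_down hγ hd hp (w p)
    (fun _ hq => (hw.edgeT_of_ne_zero hq).exists_eq_add_single (Or.inl hp))
    fun _ hx => hw.sum_mul_eq_zero_of_mem_L hγ hd hp hx

/-- A point mass on a single column is orthogonal to the kernel only if it vanishes: it would be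
a multiple of a row, but every row has `d ≥ 2` nonzero entries. -/
lemma sum_eq_zero_of_mem_lowerLayer (hw : IsJOrthogonal d n γ t w) (hγ : GoodCond d n γ)
    (hd : 2 ≤ d) {q : V d} (hq : q ∈ lowerLayer d n t) : ∑ p ∈ box d n, w q p = 0 := by
  set c := ∑ p ∈ box d n, w q p
  by_contra hc
  obtain ⟨p, -, hqp⟩ := exists_ne_zero_of_sum_ne_zero hc
  have he := hw.edgeT_of_ne_zero hqp
  have hpL : p ∈ L d n (t + 1) := (he.mem_upperLayer hq).resolve_right fun hp =>
    hqp (by rw [hw.symm, hw.eq_zero_of_mem_Kp hγ (by omega) hp])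
  obtain ⟨i, rfl⟩ := he.symm.exists_eq_add_single (Or.inl hpL)
  have hqbox : q ∈ box d n := mem_box_of_mem_Vset he.1.2.1
  obtain ⟨a, ha⟩ := exists_eq_mul_down hγ (by omega) hpL (fun r => if r = q then c else 0)
    (fun r hr => ⟨i, by rw [of_not_not fun hrq => hr (if_neg hrq)]⟩) fun x hx => by
      rw [sum_eq_single_of_mem q hqbox fun r _ hrq => by rw [if_neg hrq, zero_mul], if_pos rfl,
        mul_comm]
      exact hw.mul_sum_eq_zero_of_mem_lowerLayer hγ (by omega) hq hx
  have : Nontrivial (Fin d) := Fin.nontrivial_iff_two_le.2 hd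
  obtain ⟨j, hji⟩ := exists_ne i
  have ha0 : a = 0 := by
    have hj := ha _ (mem_box_of_mem_Vset (adj_sub_single hpL.1 j).2.2.1)
    rw [if_neg (by rw [add_sub_right_comm]; exact sub_single_add_single_ne q hji.symm)] at hj
    exact (mul_eq_zero.1 hj.symm).resolve_right (down_sub_single_pos hγ hpL.1 j).ne'
  exact hc (by simpa [ha0] using ha q hqbox)

lemma sum_Lfin_eq_zero (hw : IsJOrthogonal d n γ t w) (hγ : GoodCond d n γ) (hd : 2 ≤ d)
    (q : V d) : ∑ p ∈ Lfin d n (t + 1), w p q = 0 := by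
  by_cases hq : q ∈ lowerLayer d n t
  · rw [← hw.sum_eq_zero_of_mem_lowerLayer hγ hd hq]
    calc ∑ p ∈ Lfin d n (t + 1), w p q = ∑ p ∈ Lfin d n (t + 1), w q p :=
          sum_congr rfl fun p _ => hw.symm p q
      _ = ∑ p ∈ box d n, w q p := sum_subset (filter_subset _ _) fun p _ hp => ?_
    by_contra hqp
    have hpK := ((hw.edgeT_of_ne_zero hqp).mem_upperLayer hq).resolve_left fun h =>
      hp (mem_Lfin.2 h)
    exact hqp (by rw [hw.symm, hw.eq_zero_of_mem_Kp hγ (by omega) hpK])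
  · refine sum_eq_zero fun p hp => by_contra fun hpq => hq ?_
    exact (hw.edgeT_of_ne_zero hpq).mem_lowerLayer (Or.inl (mem_Lfin.1 hp))

lemma eq_zero_of_mem_L (hw : IsJOrthogonal d n γ t w) (hγ : GoodCond d n γ) (hd : 2 ≤ d)
    {p : V d} (hp : p ∈ L d n (t + 1)) (q : V d) : w p q = 0 := by
  choose! a ha using fun p (hp : p ∈ L d n (t + 1)) =>
    hw.exists_eq_mul_down_of_mem_L hγ (by omega) hp
  have ha0 := eq_zero_of_sum_mul_down_eq_zero hγ (by omega) a fun q hq => by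
    rw [← hw.sum_Lfin_eq_zero hγ hd q]
    exact sum_congr rfl fun p hp => (ha p (mem_Lfin.1 hp) q hq).symm
  by_contra hpq
  have hq := mem_box_of_mem_Vset (hw.edgeT_of_ne_zero hpq).1.2.2.1
  exact hpq (by rw [ha p hp q hq, ha0 p (mem_Lfin.2 hp), zero_mul])

lemma eq_zero_of_mem_upperLayer (hw : IsJOrthogonal d n γ t w) (hγ : GoodCond d n γ)
    (hd : 2 ≤ d) {p : V d} (hp : p ∈ upperLayer d n t) (q : V d) : w p q = 0 :=
  hp.elim (hw.eq_zero_of_mem_L hγ hd · q) (hw.eq_zero_of_mem_Kp hγ (by omega) · q)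

end IsJOrthogonal

theorem stmt14_general (d n : ℕ) (hd : 2 ≤ d)
    (γ : V d → V d → ℝ) (hγ : GoodCond d n γ)
    (t : ℤ)
    (w : V d → V d → ℝ)
    (hsym : ∀ a b, w a b = w b a)
    (hsupp : ∀ a b, ¬ EdgeT d n t a b → w a b = 0)
    (horth : ∀ u ∈ Uset d n γ t, ∀ p ∈ L d n t ∪ L d n (t + 1) ∪ Jslice d n t,
      dotE d n (Jvec d n t u p) w = 0) :
    ∀ a b, w a b = 0 := by
  have hw : IsJOrthogonal d n γ t w := ⟨hsym, hsupp, horth⟩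
  intro a b
  by_contra hab
  rcases (hw.edgeT_of_ne_zero hab).mem_layers with ⟨-, hb⟩ | ⟨-, ha⟩
  · exact hab (by rw [hsym, hw.eq_zero_of_mem_upperLayer hγ hd hb])
  · exact hab (hw.eq_zero_of_mem_upperLayer hγ hd ha b)

/-- the orthogonal complement of
`span{ J_p^u : u ∈ 𝒰^{(t)}, p ∈ L_t ∪ L_{t+1} ∪ J_t }` in `ℝ^{E_t}` is trivial. -/
theorem stmt14 (d n : ℕ) (hd : 2 ≤ d) (hn : 1 ≤ n)
    (γ : V d → V d → ℝ) (hγ : GoodCond d n γ)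
    (t : ℤ) (ht1 : (d : ℤ) - 1 ≤ t) (ht2 : t ≤ (d : ℤ) * n - 1)
    (w : V d → V d → ℝ)
    (hsym : ∀ a b, w a b = w b a)
    (hsupp : ∀ a b, ¬ EdgeT d n t a b → w a b = 0)
    (horth : ∀ u ∈ Uset d n γ t, ∀ p ∈ L d n t ∪ L d n (t + 1) ∪ Jslice d n t,
      dotE d n (Jvec d n t u p) w = 0) :
    ∀ a b, w a b = 0 :=
  stmt14_general d n hd γ hγ t w hsym hsupp horth

end DiscreteCalderon
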